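/- Let τ ∈ (0, 1) and set λ := 4τ²/(1 − τ²) > 0. Define M : (0, ∞) → ℝ by M(z) := (√(1 + 4/z) − 1)/2, and let M′(z) denote its derivative at z. Then: (i) z² · (−M′(z)) = (1 + 4/z)^{−1/2} for every z > 0; (ii) λ² · (−M′(λ)) = τ; and (iii) M(λ) − λ · (−M′(λ)) = 1/(4τ) + τ/4 − 1/2. -/

import Mathlib

/-!
Writing `s = √(1 + 4/z)`, the chain rule gives `-M'(z) = 1 / (z² s)`, which is (i). At
`λ = 4τ²/(1 - τ²)` one has `1 + 4/λ = 1/τ²`, so `s = 1/τ`; then (ii) is (i) at `λ`, and (iii)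
is the identity `(1/τ - 1)/2 - τ/λ = 1/(4τ) + τ/4 - 1/2`.
-/

open Real

noncomputable def mpStieltjesOne (z : ℝ) : ℝ := (√(1 + 4 / z) - 1) / 2

theorem hasDerivAt_mpStieltjesOne {z : ℝ} (hz : z ≠ 0) (hs : 0 < 1 + 4 / z) :
    HasDerivAt mpStieltjesOne (-(1 / (z ^ 2 * √(1 + 4 / z)))) z := by
  have hinner : HasDerivAt (fun z : ℝ => 1 + 4 / z) (4 * -(z ^ 2)⁻¹) z := by
    simpa only [div_eq_mul_inv] using ((hasDerivAt_inv hz).const_mul 4).const_add 1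
  have hsqrt_pos : 0 < √(1 + 4 / z) := sqrt_pos.mpr hs
  refine ((((hasDerivAt_sqrt hs.ne').comp z hinner).sub_const 1).div_const 2).congr_deriv ?_
  field_simp
  ring

theorem sq_mul_neg_deriv_mpStieltjesOne {z : ℝ} (hz : z ≠ 0) (hs : 0 < 1 + 4 / z) :
    z ^ 2 * -deriv mpStieltjesOne z = 1 / √(1 + 4 / z) := by
  have hsqrt_pos : 0 < √(1 + 4 / z) := sqrt_pos.mpr hs
  rw [(hasDerivAt_mpStieltjesOne hz hs).deriv]
  field_simp

theorem one_add_four_div_eq_inv_sq {τ : ℝ} (hτ0 : τ ≠ 0) (hτ1 : τ ^ 2 ≠ 1) :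
    1 + 4 / (4 * τ ^ 2 / (1 - τ ^ 2)) = 1 / τ ^ 2 := by
  have : 1 - τ ^ 2 ≠ 0 := sub_ne_zero.mpr (Ne.symm hτ1)
  field_simp
  ring

theorem stmt18 (τ : ℝ) (hτ0 : 0 < τ) (hτ1 : τ < 1)
    (lam : ℝ) (hlam : lam = 4 * τ ^ 2 / (1 - τ ^ 2))
    (M : ℝ → ℝ) (hM : ∀ z, M z = (Real.sqrt (1 + 4 / z) - 1) / 2) :
    (∀ z : ℝ, 0 < z → z ^ 2 * (-(deriv M z)) = 1 / Real.sqrt (1 + 4 / z)) ∧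
    lam ^ 2 * (-(deriv M lam)) = τ ∧
    M lam - lam * (-(deriv M lam)) = 1 / (4 * τ) + τ / 4 - 1 / 2 := by
  obtain rfl : M = mpStieltjesOne := funext hM
  have hτsq : 0 < 1 - τ ^ 2 := by nlinarith
  have hlam_pos : 0 < lam := hlam ▸ by positivity
  have hsqrt_lam : √(1 + 4 / lam) = 1 / τ := by
    rw [hlam, one_add_four_div_eq_inv_sq hτ0.ne' (by nlinarith), one_div, sqrt_inv,
      sqrt_sq hτ0.le, one_div]
  have hi : ∀ z : ℝ, 0 < z → z ^ 2 * -deriv mpStieltjesOne z = 1 / √(1 + 4 / z) :=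
    fun z hz => sq_mul_neg_deriv_mpStieltjesOne hz.ne' (by positivity)
  have hii : lam ^ 2 * -deriv mpStieltjesOne lam = τ := by
    rw [hi lam hlam_pos, hsqrt_lam, one_div_one_div]
  refine ⟨hi, hii, ?_⟩
  have hlam_deriv : lam * -deriv mpStieltjesOne lam = τ / lam := by
    rw [← hii]
    field_simp
  rw [hlam_deriv, mpStieltjesOne, hsqrt_lam, hlam]
  field_simp
  ring
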